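/- Let b : ℝ → ℝ be defined by b(x) = x²(Φ(x) − 1) + x φ(x), so that b'(x) = φ(x) − 2x(1 − Φ(x)). Then for every x ∈ (0,∞): φ(x) · b(x) > (Φ(x) − 1/2) · b'(x). -/

import Mathlib

/-!
Write `A = Φ - 1/2 - xφ`; it is nonnegative on `[0, ∞)` since `A(0) = 0` and `A' = x²φ`.
Expanding `b` and `b'`, the claim becomes `A b' < x² φ (1 - Φ)`. The lower Mills-ratio bound
`xφ < (1 + x²)(1 - Φ)` gives `(1 + x²) b' ≤ (1 - x²) φ`, and `(1 - x²) A ≤ x³ φ` holds because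
both sides agree at `0` and the derivative of their difference is `2x²φ + 2xA ≥ 0`. Hence
`(1 + x²) A b' ≤ x³ φ² < (1 + x²) x² φ (1 - Φ)`.

Both Mills-ratio bounds, `x(1 - Φ) < φ` and `xφ < (1 + x²)(1 - Φ)`, come from strictly
decreasing functions that vanish at infinity; the decay of `1 - Φ` is the Chernoff bound
`1 - Φ(x) ≤ e^{-x²/2}`.
-/

open MeasureTheory ProbabilityTheory Filter Topology

/-- The standard Gaussian density `φ(x) = e^{-x²/2}/√(2π)`. -/
noncomputable def gaussPhi (x : ℝ) : ℝ := Real.exp (-x ^ 2 / 2) / Real.sqrt (2 * Real.pi)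

/-- The standard Gaussian distribution function `Φ(x) = ∫_{-∞}^x φ`. -/
noncomputable def gaussCdf (x : ℝ) : ℝ := ((gaussianReal 0 1) (Set.Iic x)).toReal

/-- `b(x) = x²(Φ(x) − 1) + x φ(x)`. -/
noncomputable def bfun (x : ℝ) : ℝ := x ^ 2 * (gaussCdf x - 1) + x * gaussPhi x

/-- `b'(x) = φ(x) − 2x(1 − Φ(x))`. -/
noncomputable def bfun' (x : ℝ) : ℝ := gaussPhi x - 2 * x * (1 - gaussCdf x)

open Set

lemma gaussPhi_eq_gaussianPDFReal : gaussPhi = gaussianPDFReal 0 1 := by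
  ext x
  simp [gaussPhi, gaussianPDFReal, div_eq_inv_mul]

lemma gaussPhi_pos (x : ℝ) : 0 < gaussPhi x :=
  gaussPhi_eq_gaussianPDFReal ▸ gaussianPDFReal_pos 0 1 x one_ne_zero

lemma hasDerivAt_gaussPhi (x : ℝ) : HasDerivAt gaussPhi (-x * gaussPhi x) x := by
  have h : HasDerivAt (fun y : ℝ => -y ^ 2 / 2) (-x) x :=
    ((hasDerivAt_pow 2 x).fun_neg.div_const 2).congr_deriv (by ring)
  exact (h.exp.div_const _).congr_deriv (by rw [gaussPhi]; ring)

lemma tendsto_pow_mul_gaussPhi_atTop (n : ℕ) :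
    Tendsto (fun x => x ^ n * gaussPhi x) atTop (𝓝 0) := by
  have h := ((tendsto_rpow_abs_mul_exp_neg_mul_sq_cocompact (by norm_num : (0 : ℝ) < 1 / 2) n
    ).mono_left atTop_le_cocompact).div_const (Real.sqrt (2 * Real.pi))
  rw [zero_div] at h
  refine h.congr' ?_
  filter_upwards [eventually_ge_atTop 0] with x hx
  rw [abs_of_nonneg hx, Real.rpow_natCast, gaussPhi, mul_div_assoc]
  congr 3; ring

lemma gaussCdf_eq_integral (x : ℝ) : gaussCdf x = ∫ t in Iic x, gaussPhi t := by
  rw [gaussCdf, gaussianReal_apply_eq_integral 0 one_ne_zero, gaussPhi_eq_gaussianPDFReal,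
    ENNReal.toReal_ofReal (integral_nonneg (gaussianPDFReal_nonneg 0 1))]

lemma hasDerivAt_gaussCdf (x : ℝ) : HasDerivAt gaussCdf (gaussPhi x) x := by
  have hint : Integrable gaussPhi := gaussPhi_eq_gaussianPDFReal ▸ integrable_gaussianPDFReal 0 1
  have hcont : Continuous gaussPhi := by unfold gaussPhi; fun_prop
  have hcdf : gaussCdf = fun y => gaussCdf 0 + ∫ t in (0 : ℝ)..y, gaussPhi t := by
    ext y
    rw [gaussCdf_eq_integral, gaussCdf_eq_integral,
      ← intervalIntegral.integral_Iic_sub_Iic hint.integrableOn hint.integrableOn]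
    ring
  rw [hcdf]
  exact (intervalIntegral.integral_hasDerivAt_right hint.intervalIntegrable
    (hcont.stronglyMeasurableAtFilter _ _) hcont.continuousAt).const_add _

lemma one_sub_gaussCdf (x : ℝ) : 1 - gaussCdf x = (gaussianReal 0 1).real (Ioi x) := by
  rw [← compl_Iic, probReal_compl_eq_one_sub measurableSet_Iic]
  rfl

lemma gaussCdf_zero : gaussCdf 0 = 1 / 2 := by
  have := nullSingletonClass_gaussianReal (μ := 0) (v := 1) one_ne_zero
  have hsymm : (gaussianReal 0 1).real (Ici 0) = gaussCdf 0 := by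
    conv_rhs => rw [gaussCdf, ← measureReal_def, ← neg_zero, ← gaussianReal_map_neg]
    rw [map_measureReal_apply measurable_neg measurableSet_Iic]
    simp
  have h := one_sub_gaussCdf 0
  rw [measureReal_congr Ioi_ae_eq_Ici, hsymm] at h
  linarith

lemma one_sub_gaussCdf_pos (x : ℝ) : 0 < 1 - gaussCdf x := by
  rw [one_sub_gaussCdf, measureReal_def, ENNReal.toReal_pos_iff]
  refine ⟨pos_iff_ne_zero.2 fun h => ?_, measure_lt_top _ _⟩
  have := gaussianReal_absolutelyContinuous' 0 one_ne_zero h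
  simp at this

/-- The Chernoff bound, at the optimal parameter `t = x`. -/
lemma one_sub_gaussCdf_le {x : ℝ} (hx : 0 ≤ x) :
    1 - gaussCdf x ≤ Real.sqrt (2 * Real.pi) * gaussPhi x := by
  have h := measure_ge_le_exp_mul_mgf (X := id) (μ := gaussianReal 0 1) x hx
    (integrable_exp_mul_gaussianReal x)
  rw [mgf_id_gaussianReal, ← Real.exp_add] at h
  calc 1 - gaussCdf x ≤ (gaussianReal 0 1).real {ω | x ≤ id ω} := by
        rw [one_sub_gaussCdf]
        exact measureReal_mono Ioi_subset_Ici_self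
    _ ≤ _ := h
    _ = _ := by
        rw [gaussPhi, mul_div_cancel₀ _ (by positivity)]
        congr 1; push_cast; ring

lemma tendsto_pow_mul_one_sub_gaussCdf_atTop (n : ℕ) :
    Tendsto (fun x => x ^ n * (1 - gaussCdf x)) atTop (𝓝 0) := by
  have h := (tendsto_pow_mul_gaussPhi_atTop n).const_mul (Real.sqrt (2 * Real.pi))
  rw [mul_zero] at h
  refine tendsto_of_tendsto_of_tendsto_of_le_of_le' tendsto_const_nhds h ?_ ?_
  · filter_upwards [eventually_ge_atTop 0] with x hx
    exact mul_nonneg (pow_nonneg hx n) (one_sub_gaussCdf_pos x).le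
  · filter_upwards [eventually_ge_atTop 0] with x hx
    rw [mul_left_comm]
    exact mul_le_mul_of_nonneg_left (one_sub_gaussCdf_le hx) (pow_nonneg hx n)

lemma pos_of_hasDerivAt_neg_of_tendsto_atTop_zero {f f' : ℝ → ℝ}
    (hf : ∀ x, HasDerivAt f (f' x) x) (hf' : ∀ x, f' x < 0) (hlim : Tendsto f atTop (𝓝 0))
    (x : ℝ) : 0 < f x :=
  have hanti := strictAnti_of_hasDerivAt_neg hf hf'
  (hanti.antitone.le_of_tendsto hlim (x + 1)).trans_lt (hanti (lt_add_one x))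

lemma nonneg_of_hasDerivAt_nonneg_of_map_zero {f f' : ℝ → ℝ}
    (hf : ∀ x, HasDerivAt f (f' x) x) (hf' : ∀ x, 0 < x → 0 ≤ f' x) (h0 : f 0 = 0)
    {x : ℝ} (hx : 0 ≤ x) : 0 ≤ f x := by
  have hmono : MonotoneOn f (Ici 0) :=
    monotoneOn_of_hasDerivWithinAt_nonneg (convex_Ici 0)
      (fun y _ => (hf y).continuousAt.continuousWithinAt) (fun y _ => (hf y).hasDerivWithinAt)
      (fun y hy => hf' y (by simpa using hy))
  simpa [h0] using hmono self_mem_Ici hx hx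

lemma mul_one_sub_gaussCdf_lt_gaussPhi (x : ℝ) : x * (1 - gaussCdf x) < gaussPhi x := by
  have hderiv (y : ℝ) : HasDerivAt (fun y => gaussPhi y - y * (1 - gaussCdf y))
      (-(1 - gaussCdf y)) y :=
    ((hasDerivAt_gaussPhi y).sub ((hasDerivAt_id y).mul
      ((hasDerivAt_gaussCdf y).const_sub 1))).congr_deriv (by simp)
  have hlim := (tendsto_pow_mul_gaussPhi_atTop 0).sub (tendsto_pow_mul_one_sub_gaussCdf_atTop 1)
  rw [sub_zero] at hlim
  exact sub_pos.1 <| pos_of_hasDerivAt_neg_of_tendsto_atTop_zero hderiv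
    (fun y => neg_neg_of_pos (one_sub_gaussCdf_pos y)) (hlim.congr fun y => by ring) x

lemma mul_gaussPhi_lt_one_add_sq_mul_one_sub_gaussCdf (x : ℝ) :
    x * gaussPhi x < (1 + x ^ 2) * (1 - gaussCdf x) := by
  have hderiv (y : ℝ) : HasDerivAt (fun y => (1 + y ^ 2) * (1 - gaussCdf y) - y * gaussPhi y)
      (-2 * (gaussPhi y - y * (1 - gaussCdf y))) y :=
    ((((hasDerivAt_pow 2 y).const_add 1).mul ((hasDerivAt_gaussCdf y).const_sub 1)).sub
      ((hasDerivAt_id y).mul (hasDerivAt_gaussPhi y))).congr_deriv (by simp; ring)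
  have hlim := ((tendsto_pow_mul_one_sub_gaussCdf_atTop 0).add
    (tendsto_pow_mul_one_sub_gaussCdf_atTop 2)).sub (tendsto_pow_mul_gaussPhi_atTop 1)
  rw [add_zero, sub_zero] at hlim
  exact sub_pos.1 <| pos_of_hasDerivAt_neg_of_tendsto_atTop_zero hderiv
    (fun y => by linarith [mul_one_sub_gaussCdf_lt_gaussPhi y]) (hlim.congr fun y => by ring) x

lemma hasDerivAt_gaussCdf_sub_half_sub_mul_gaussPhi (x : ℝ) :
    HasDerivAt (fun y => gaussCdf y - 1 / 2 - y * gaussPhi y) (x ^ 2 * gaussPhi x) x :=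
  (((hasDerivAt_gaussCdf x).sub_const _).sub ((hasDerivAt_id x).mul (hasDerivAt_gaussPhi x))
    ).congr_deriv (by simp; ring)

lemma gaussCdf_sub_half_sub_mul_gaussPhi_nonneg {x : ℝ} (hx : 0 ≤ x) :
    0 ≤ gaussCdf x - 1 / 2 - x * gaussPhi x :=
  nonneg_of_hasDerivAt_nonneg_of_map_zero hasDerivAt_gaussCdf_sub_half_sub_mul_gaussPhi
    (fun y _ => mul_nonneg (sq_nonneg y) (gaussPhi_pos y).le) (by simp [gaussCdf_zero]) hx

lemma one_sub_sq_mul_le_pow_three_mul_gaussPhi {x : ℝ} (hx : 0 ≤ x) :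
    (1 - x ^ 2) * (gaussCdf x - 1 / 2 - x * gaussPhi x) ≤ x ^ 3 * gaussPhi x := by
  have hderiv (y : ℝ) : HasDerivAt
      (fun y => y ^ 3 * gaussPhi y - (1 - y ^ 2) * (gaussCdf y - 1 / 2 - y * gaussPhi y))
      (2 * y ^ 2 * gaussPhi y + 2 * y * (gaussCdf y - 1 / 2 - y * gaussPhi y)) y :=
    (((hasDerivAt_pow 3 y).mul (hasDerivAt_gaussPhi y)).sub
      (((hasDerivAt_pow 2 y).const_sub 1).mul
        (hasDerivAt_gaussCdf_sub_half_sub_mul_gaussPhi y))).congr_deriv (by simp; ring)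
  refine sub_nonneg.1 <| nonneg_of_hasDerivAt_nonneg_of_map_zero hderiv (fun y hy => ?_)
    (by simp [gaussCdf_zero]) hx
  have := gaussCdf_sub_half_sub_mul_gaussPhi_nonneg hy.le
  have := gaussPhi_pos y
  positivity

theorem elementary_gaussian_inequality :
    ∀ x : ℝ, 0 < x → (gaussCdf x - 1 / 2) * bfun' x < gaussPhi x * bfun x := by
  intro x hx
  have hP := gaussPhi_pos x
  have hA := gaussCdf_sub_half_sub_mul_gaussPhi_nonneg hx.le
  have hK := one_sub_sq_mul_le_pow_three_mul_gaussPhi hx.le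
  have hMills := mul_gaussPhi_lt_one_add_sq_mul_one_sub_gaussCdf x
  rw [bfun, bfun']
  generalize gaussPhi x = P at *
  generalize gaussCdf x = c at *
  have hb' : (1 + x ^ 2) * (P - 2 * x * (1 - c)) ≤ (1 - x ^ 2) * P := by
    nlinarith [mul_lt_mul_of_pos_left hMills hx]
  have key : (1 + x ^ 2) * ((c - 1 / 2 - x * P) * (P - 2 * x * (1 - c)))
      < (1 + x ^ 2) * (x ^ 2 * P * (1 - c)) :=
    calc _ = (c - 1 / 2 - x * P) * ((1 + x ^ 2) * (P - 2 * x * (1 - c))) := by ring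
      _ ≤ (c - 1 / 2 - x * P) * ((1 - x ^ 2) * P) := mul_le_mul_of_nonneg_left hb' hA
      _ = P * ((1 - x ^ 2) * (c - 1 / 2 - x * P)) := by ring
      _ ≤ P * (x ^ 3 * P) := mul_le_mul_of_nonneg_left hK hP.le
      _ = x ^ 2 * P * (x * P) := by ring
      _ < x ^ 2 * P * ((1 + x ^ 2) * (1 - c)) := mul_lt_mul_of_pos_left hMills (by positivity)
      _ = _ := by ring
  linear_combination lt_of_mul_lt_mul_left key (by positivity)
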